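/- Let S be a Seidel matrix of order n = a + b + c having exactly three distinct eigenvalues λ, μ, ν with multiplicities a, b, c respectively (a, b, c ≥ 1). Then necessarily a = n(n−1+μν)/((λ−μ)(λ−ν)), b = n(n−1+λν)/((μ−λ)(μ−ν)), and c = n(n−1+λμ)/((ν−λ)(ν−μ)); in particular these three quantities are positive integers. -/

import Mathlib

/-!
The entries of a Seidel matrix `S` of order `n` give `tr S = 0` and `tr S² = n(n-1)`. By the
spectral theorem these traces are the first two power sums of the eigenvalues, counted with
multiplicity, so `(a, b, c)` solves the Vandermonde system `a + b + c = n`,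
`aλ + bμ + cν = 0`, `aλ² + bμ² + cν² = n(n-1)`, which Lagrange interpolation at `λ, μ, ν` solves.
-/

open Polynomial

/-- A Seidel matrix: a real symmetric matrix with zero diagonal and all off-diagonal
entries equal to `±1`. -/
def IsSeidel {m : Type*} (S : Matrix m m ℝ) : Prop :=
  S.IsSymm ∧ (∀ i, S i i = 0) ∧ ∀ i j, i ≠ j → S i j = 1 ∨ S i j = -1

namespace Matrix

lemma IsHermitian.trace_cfc_eq_sum_map_roots {n : Type*} [Fintype n] [DecidableEq n]
    {A : Matrix n n ℝ} (hA : A.IsHermitian) (f : ℝ → ℝ) :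
    (cfc f A).trace = (A.charpoly.roots.map f).sum := by
  have hsplit : (cfc f A).charpoly.Splits := (cfc_predicate f A).isHermitian.splits_charpoly
  rw [trace_eq_sum_roots_charpoly_of_splits hsplit, hA.charpoly_cfc_eq,
    roots_prod _ _ (Finset.prod_ne_zero_iff.2 fun i _ ↦ X_sub_C_ne_zero _),
    hA.roots_charpoly_eq_eigenvalues]
  simp [Multiset.map_map, Multiset.bind]

end Matrix

namespace IsSeidel

variable {m : Type*} {S : Matrix m m ℝ}

lemma isHermitian (hS : IsSeidel S) : S.IsHermitian :=
  Matrix.isHermitian_iff_isSymm.2 hS.1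

lemma trace_eq_zero [Fintype m] (hS : IsSeidel S) : S.trace = 0 :=
  Finset.sum_eq_zero fun i _ ↦ hS.2.1 i

lemma apply_mul_apply_swap [DecidableEq m] (hS : IsSeidel S) (i j : m) :
    S i j * S j i = 1 - (1 : Matrix m m ℝ) i j := by
  obtain rfl | hij := eq_or_ne i j
  · simp [hS.2.1]
  · rw [Matrix.one_apply_ne hij, hS.1.apply i j]
    rcases hS.2.2 i j hij with h | h <;> norm_num [h]

lemma trace_sq [Fintype m] [DecidableEq m] (hS : IsSeidel S) :
    (S ^ 2).trace = Fintype.card m * (Fintype.card m - 1) := by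
  simp only [sq, Matrix.trace, Matrix.diag, Matrix.mul_apply, hS.apply_mul_apply_swap]
  simp [Finset.sum_sub_distrib, Matrix.one_apply]
  ring

end IsSeidel

lemma eq_div_of_moments {n a b c lam mu nu : ℝ} (hlm : lam ≠ mu) (hln : lam ≠ nu)
    (h₀ : a + b + c = n) (h₁ : a * lam + b * mu + c * nu = 0)
    (h₂ : a * lam ^ 2 + b * mu ^ 2 + c * nu ^ 2 = n * (n - 1)) :
    a = n * (n - 1 + mu * nu) / ((lam - mu) * (lam - nu)) := by
  rw [eq_div_iff (mul_ne_zero (sub_ne_zero.2 hlm) (sub_ne_zero.2 hln))]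
  linear_combination h₂ - (mu + nu) * h₁ + mu * nu * h₀

theorem stmt_7_general (n a b c : ℕ) (hn : n = a + b + c)
    (lam mu nu : ℝ) (h₁ : lam ≠ mu) (h₂ : lam ≠ nu) (h₃ : mu ≠ nu)
    (S : Matrix (Fin n) (Fin n) ℝ) (hS : IsSeidel S)
    (hspec : S.charpoly = (X - C lam) ^ a * (X - C mu) ^ b * (X - C nu) ^ c) :
    (a : ℝ) = n * (n - 1 + mu * nu) / ((lam - mu) * (lam - nu)) ∧
    (b : ℝ) = n * (n - 1 + lam * nu) / ((mu - lam) * (mu - nu)) ∧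
    (c : ℝ) = n * (n - 1 + lam * mu) / ((nu - lam) * (nu - mu)) := by
  have hroots : S.charpoly.roots = a • {lam} + b • {mu} + c • {nu} := by
    simp [hspec, roots_mul, X_sub_C_ne_zero, roots_pow]
  have moment (f : ℝ → ℝ) : (cfc f S).trace = a * f lam + b * f mu + c * f nu := by
    simp [hS.isHermitian.trace_cfc_eq_sum_map_roots, hroots, Multiset.map_nsmul,
      Multiset.sum_nsmul]
  have E₀ : (a + b + c : ℝ) = n := by exact_mod_cast hn.symm
  have E₁ : a * lam + b * mu + c * nu = (0 : ℝ) := by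
    rw [← hS.trace_eq_zero, ← cfc_id' ℝ S hS.isHermitian.isSelfAdjoint, moment]
  have E₂ : a * lam ^ 2 + b * mu ^ 2 + c * nu ^ 2 = (n * (n - 1) : ℝ) := by
    rw [← Fintype.card_fin n, ← hS.trace_sq,
      ← cfc_pow_id (R := ℝ) S 2 hS.isHermitian.isSelfAdjoint, moment]
  refine ⟨eq_div_of_moments h₁ h₂ E₀ E₁ E₂, ?_, ?_⟩
  · exact eq_div_of_moments (a := b) (b := a) (c := c) h₁.symm h₃
      (by linarith) (by linarith) (by linarith)
  · exact eq_div_of_moments (a := c) (b := a) (c := b) h₂.symm h₃.symm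
      (by linarith) (by linarith) (by linarith)

/-- Let `S` be a Seidel matrix of order `n = a + b + c` having exactly three
distinct eigenvalues `lam, mu, nu` with multiplicities `a, b, c ≥ 1` respectively.  Then
`a = n(n−1+μν)/((λ−μ)(λ−ν))`, `b = n(n−1+λν)/((μ−λ)(μ−ν))`, `c = n(n−1+λμ)/((ν−λ)(ν−μ))`;
in particular these quantities are positive integers. -/
theorem stmt_7 (n a b c : ℕ) (ha : 1 ≤ a) (hb : 1 ≤ b) (hc : 1 ≤ c) (hn : n = a + b + c)
    (lam mu nu : ℝ) (h₁ : lam ≠ mu) (h₂ : lam ≠ nu) (h₃ : mu ≠ nu)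
    (S : Matrix (Fin n) (Fin n) ℝ) (hS : IsSeidel S)
    (hspec : S.charpoly = (X - C lam) ^ a * (X - C mu) ^ b * (X - C nu) ^ c) :
    (a : ℝ) = n * (n - 1 + mu * nu) / ((lam - mu) * (lam - nu)) ∧
    (b : ℝ) = n * (n - 1 + lam * nu) / ((mu - lam) * (mu - nu)) ∧
    (c : ℝ) = n * (n - 1 + lam * mu) / ((nu - lam) * (nu - mu)) :=
  stmt_7_general n a b c hn lam mu nu h₁ h₂ h₃ S hS hspec
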